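/- Let b : ℤ → ℂ be supported on a discrete interval Q of length 2^s with ∑_x b(x) = 0, and let t > s be an integer. Then for the indicator function χ of the discrete interval [1, 2^t], the convolution χ ∗ b satisfies ‖χ ∗ b‖₁ ≤ 2^{t} · (2·2^s/2^t) · ‖b‖₁, i.e. ‖2^{-t} χ_{[1,2^t]} ∗ b‖₁ ≤ 2^{-t+s+1} ‖b‖₁. -/

import Mathlib

/-- Convolution on ℤ. -/
noncomputable def conv (f g : ℤ → ℂ) (x : ℤ) : ℂ := ∑' j : ℤ, f (x - j) * g j

/-!
Write `χ` for the indicator of `{1, …, 2^t}` and let `b` live on `Q = {a, …, a + 2^s - 1}`.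
For `x ∈ [a + 2^s, a + 2^t]` the translate `x - Q` lies inside `{1, …, 2^t}`, so `(χ ∗ b)(x)` is the
full sum of `b`, which vanishes; for `x ≤ a` or `x ≥ a + 2^t + 2^s` the translate misses `{1, …, 2^t}`.
Hence `χ ∗ b` is supported on two intervals of fewer than `2^s` points each, and it is bounded
there by `‖b‖₁`.
-/

open Finset

lemma conv_eq_sum_of_support_subset {f g : ℤ → ℂ} {F : Finset ℤ}
    (hg : Function.support g ⊆ F) (x : ℤ) : conv f g x = ∑ j ∈ F, f (x - j) * g j :=
  tsum_eq_sum fun j hj => by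
    rw [Function.notMem_support.1 fun h => hj (hg h), mul_zero]

lemma norm_conv_le_of_norm_le_one {f g : ℤ → ℂ} {F : Finset ℤ}
    (hg : Function.support g ⊆ F) (hf : ∀ y, ‖f y‖ ≤ 1) (x : ℤ) :
    ‖conv f g x‖ ≤ ∑' j, ‖g j‖ := by
  have hF : ∀ j ∉ F, ‖g j‖ = 0 := fun j hj => by
    rw [Function.notMem_support.1 fun h => hj (hg h), norm_zero]
  rw [conv_eq_sum_of_support_subset hg, tsum_eq_sum hF]
  refine (norm_sum_le _ _).trans (sum_le_sum fun j _ => ?_)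
  rw [norm_mul]
  exact mul_le_of_le_one_left (norm_nonneg _) (hf _)

section Boxcar

variable {b : ℤ → ℂ} {a N : ℤ} {L : ℕ}

lemma conv_indicator_Icc_eq_tsum (hsupp : Function.support b ⊆ Set.Icc a (a + L - 1))
    {x : ℤ} (hlo : a + L ≤ x) (hhi : x ≤ a + N) :
    conv ((Set.Icc 1 N).indicator 1) b x = ∑' j, b j := by
  rw [← coe_Icc] at hsupp
  rw [conv_eq_sum_of_support_subset hsupp, tsum_eq_sum fun j hj =>
    Function.notMem_support.1 fun h => hj (hsupp h)]
  refine sum_congr rfl fun j hj => ?_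
  rw [mem_Icc] at hj
  rw [Set.indicator_of_mem (by constructor <;> omega), Pi.one_apply, one_mul]

lemma conv_indicator_Icc_eq_zero (hsupp : Function.support b ⊆ Set.Icc a (a + L - 1))
    {x : ℤ} (hx : x ≤ a ∨ a + N + L ≤ x) :
    conv ((Set.Icc 1 N).indicator 1) b x = 0 := by
  rw [← coe_Icc] at hsupp
  rw [conv_eq_sum_of_support_subset hsupp]
  refine sum_eq_zero fun j hj => ?_
  rw [mem_Icc] at hj
  rw [Set.indicator_of_notMem (by rw [Set.mem_Icc]; omega), zero_mul]

lemma support_conv_indicator_Icc_subset (hsupp : Function.support b ⊆ Set.Icc a (a + L - 1))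
    (hmean : ∑' x, b x = 0) :
    Function.support (conv ((Set.Icc 1 N).indicator 1) b) ⊆
      ↑(Icc (a + 1) (a + L - 1) ∪ Icc (a + N + 1) (a + N + L - 1)) := by
  refine Function.support_subset_iff'.2 fun x hx => ?_
  simp only [coe_union, coe_Icc, Set.mem_union, Set.mem_Icc, not_or, not_and_or, not_le] at hx
  by_cases hmid : a + L ≤ x ∧ x ≤ a + N
  · rw [conv_indicator_Icc_eq_tsum hsupp hmid.1 hmid.2, hmean]
  · exact conv_indicator_Icc_eq_zero hsupp (by omega)

lemma card_Icc_union_Icc_le (a N : ℤ) (L : ℕ) :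
    #(Icc (a + 1) (a + L - 1) ∪ Icc (a + N + 1) (a + N + L - 1)) ≤ 2 * L := by
  refine (card_union_le _ _).trans ?_
  simp only [Int.card_Icc]
  omega

theorem tsum_norm_conv_indicator_Icc_le (hsupp : Function.support b ⊆ Set.Icc a (a + L - 1))
    (hmean : ∑' x, b x = 0) :
    ∑' x, ‖conv ((Set.Icc 1 N).indicator 1) b x‖ ≤ 2 * L * ∑' x, ‖b x‖ := by
  set S := Icc (a + 1) (a + L - 1) ∪ Icc (a + N + 1) (a + N + L - 1)
  have hS := support_conv_indicator_Icc_subset (N := N) hsupp hmean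
  have hb : Function.support b ⊆ ↑(Icc a (a + L - 1)) := by rwa [coe_Icc]
  have hχ : ∀ y, ‖(Set.Icc 1 N).indicator (1 : ℤ → ℂ) y‖ ≤ 1 := fun y =>
    (norm_indicator_le_norm_self _ y).trans (by simp)
  calc ∑' x, ‖conv ((Set.Icc 1 N).indicator 1) b x‖
      = ∑ x ∈ S, ‖conv ((Set.Icc 1 N).indicator 1) b x‖ :=
        tsum_eq_sum fun x hx => by rw [Function.notMem_support.1 fun h => hx (hS h), norm_zero]
    _ ≤ #S • ∑' x, ‖b x‖ := sum_le_card_nsmul _ _ _ fun x _ => norm_conv_le_of_norm_le_one hb hχ x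
    _ ≤ 2 * L * ∑' x, ‖b x‖ := by
        rw [nsmul_eq_mul]
        gcongr
        exact_mod_cast card_Icc_union_Icc_le a N L

end Boxcar

theorem stmt2_general (b : ℤ → ℂ) (a : ℤ) (s t : ℕ)
    (hsupp : Function.support b ⊆ Set.Icc a (a + 2 ^ s - 1))
    (hmean : ∑' x : ℤ, b x = 0) :
    (∑' x : ℤ, ‖((2:ℂ) ^ t)⁻¹ *
        conv (fun y => if y ∈ Set.Icc (1:ℤ) (2 ^ t) then (1:ℂ) else 0) b x‖)
      ≤ (2:ℝ) ^ ((-t : ℤ) + s + 1) * ∑' x : ℤ, ‖b x‖ := by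
  have hχ : (fun y => if y ∈ Set.Icc (1:ℤ) (2 ^ t) then (1:ℂ) else 0) =
      (Set.Icc 1 (2 ^ t)).indicator 1 := by
    ext y; simp [Set.indicator_apply]
  have hsupp' : Function.support b ⊆ Set.Icc a (a + ((2 ^ s : ℕ) : ℤ) - 1) := by
    simpa using hsupp
  have hscale : (2:ℝ) ^ ((-t : ℤ) + s + 1) = ((2:ℝ) ^ t)⁻¹ * (2 * (2 ^ s : ℕ)) := by
    rw [zpow_add₀ two_ne_zero, zpow_add₀ two_ne_zero, zpow_neg, zpow_natCast, zpow_natCast]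
    push_cast
    ring
  simp only [hχ, norm_mul, norm_inv, norm_pow, Complex.norm_ofNat]
  rw [tsum_mul_left, hscale, mul_assoc]
  gcongr
  exact tsum_norm_conv_indicator_Icc_le hsupp' hmean

theorem stmt2 (b : ℤ → ℂ) (a : ℤ) (s t : ℕ) (hts : s < t)
    (hsupp : Function.support b ⊆ Set.Icc a (a + 2 ^ s - 1))
    (hmean : ∑' x : ℤ, b x = 0) :
    (∑' x : ℤ, ‖((2:ℂ) ^ t)⁻¹ *
        conv (fun y => if y ∈ Set.Icc (1:ℤ) (2 ^ t) then (1:ℂ) else 0) b x‖)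
      ≤ (2:ℝ) ^ ((-t : ℤ) + s + 1) * ∑' x : ℤ, ‖b x‖ :=
  stmt2_general b a s t hsupp hmean
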